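/- Fix an integer q ≥ 1 and let a_m denote the number of unbordered words of length m over a q-letter alphabet (e.g. Fin q). Then a_0 = 1, a_{2n+1} = q·a_{2n} for all n ≥ 0, and a_{2n} = q·a_{2n-1} − a_n for all n ≥ 1. -/

import Mathlib

/-- `B` is a border of the word `W`: a nonempty proper suffix of `W`
(proper meaning of length strictly less than `|W|`) that is also a prefix of `W`. -/
def IsBorder {α : Type*} (B W : List α) : Prop :=
  B ≠ [] ∧ B.length < W.length ∧ B <:+ W ∧ B <+: W

/-- A word is unbordered if it has no border. -/
def Unbordered {α : Type*} (W : List α) : Prop :=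
  ∀ B, ¬ IsBorder B W

/-- The number of unbordered words of length `m` over a `q`-letter alphabet. -/
noncomputable def countUnbordered (q m : ℕ) : ℕ :=
  Nat.card {w : List (Fin q) // w.length = m ∧ Unbordered w}

/-
A border longer than half of the word overlaps itself and therefore has a shorter border, which is
again a border of the word. So only borders of length at most `⌊|W|/2⌋` matter, and these see only
the first and the last `⌊|W|/2⌋` letters of `W`. Hence deleting the middle letter of a word of
length `2n+1` neither creates nor destroys borders: `a (2n+1) = q·a (2n)`. In a word `w` of
length `2n`, deleting the letter at position `n` (counted from `0`) only affects borders of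
length `n`, and `w` has such a border exactly when it is a square `x x`. So `w` is unbordered iff
the shortened word is unbordered and `w` is not a square. For `x = a z` the shortened square is
`a z z`, whose short borders are those of `x`; so the squares arising this way are exactly those
of unbordered `x`. Counting pairs of a letter and an unbordered word of length `2n-1` then gives
`q·a (2n-1) = a (2n) + a n`.
-/

variable {α : Type*}

namespace List

theorem prefix_append_iff_of_length_le {B x : List α} (l : List α) (h : B.length ≤ x.length) :
    B <+: x ++ l ↔ B <+: x :=
  ⟨fun hB => prefix_of_prefix_length_le hB (prefix_append x l) h,
    fun hB => hB.trans (prefix_append x l)⟩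

theorem suffix_append_iff_of_length_le {B y : List α} (l : List α) (h : B.length ≤ y.length) :
    B <:+ l ++ y ↔ B <:+ y :=
  ⟨fun hB => suffix_of_suffix_length_le hB (suffix_append l y) h,
    fun hB => hB.trans (suffix_append l y)⟩

theorem exists_eq_append_cons_of_lt {w : List α} {n : ℕ} (h : n < w.length) :
    ∃ x c y, w = x ++ c :: y ∧ x.length = n :=
  ⟨w.take n, w[n], w.drop (n + 1), by rw [getElem_cons_drop, take_append_drop],
    length_take_of_le h.le⟩

theorem eraseIdx_append_cons_length (x y : List α) (c : α) :
    (x ++ c :: y).eraseIdx x.length = x ++ y := by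
  simp [eraseIdx_append_of_length_le]

theorem eq_take_append_take_of_take_eq_drop {w : List α} {k : ℕ} (h : w.take k = w.drop k) :
    w = w.take k ++ w.take k := by
  conv_lhs => rw [← take_append_drop k w, ← h]

end List

theorem IsBorder.trans {C B W : List α} (hC : IsBorder C B) (hB : IsBorder B W) :
    IsBorder C W :=
  ⟨hC.1, hC.2.1.trans hB.2.1, hC.2.2.1.trans hB.2.2.1, hC.2.2.2.trans hB.2.2.2⟩

theorem IsBorder.isBorder_drop {B W : List α} (h : IsBorder B W)
    (hlong : W.length < 2 * B.length) : IsBorder (B.drop (W.length - B.length)) B := by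
  obtain ⟨hne, hlt, hsuf, hpre⟩ := h
  have hBpos : 0 < B.length := List.length_pos_iff.mpr hne
  refine ⟨?_, by simp only [List.length_drop]; omega, List.drop_suffix _ _, ?_⟩
  · rw [← List.length_pos_iff, List.length_drop]
    omega
  · have hBt : B = W.take B.length := List.prefix_iff_eq_take.mp hpre
    have hBd : B = W.drop (W.length - B.length) := List.suffix_iff_eq_drop.mp hsuf
    have hoverlap : B.drop (W.length - B.length) = B.take (B.length - (W.length - B.length)) := by
      nth_rewrite 2 [hBt]
      rw [List.drop_take, ← hBd]
    rw [hoverlap]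
    exact List.take_prefix _ _

theorem IsBorder.exists_isBorder_two_mul_length_le {B W : List α} (h : IsBorder B W) :
    ∃ C, IsBorder C W ∧ 2 * C.length ≤ W.length := by
  induction hn : B.length using Nat.strong_induction_on generalizing B with
  | _ n ih =>
    by_cases hshort : 2 * B.length ≤ W.length
    · exact ⟨B, h, hshort⟩
    · have hC := h.isBorder_drop (by omega)
      exact ih _ (hn ▸ hC.2.1) (hC.trans h) rfl

theorem unbordered_nil : Unbordered ([] : List α) :=
  fun _ hB => Nat.not_lt_zero _ hB.2.1

theorem unbordered_iff_forall_length_le {W : List α} {k : ℕ} (hW : W.length ≤ 2 * k + 1) :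
    Unbordered W ↔ ∀ B, B.length ≤ k → ¬ IsBorder B W := by
  refine ⟨fun hW B _ => hW B, fun h B hB => ?_⟩
  obtain ⟨C, hC, hCW⟩ := hB.exists_isBorder_two_mul_length_le
  exact h C (by omega) hC

theorem isBorder_append_append_iff {B x y : List α} (l : List α) (hx : B.length ≤ x.length)
    (hy : B.length ≤ y.length) : IsBorder B (x ++ l ++ y) ↔ B ≠ [] ∧ B <:+ y ∧ B <+: x := by
  rw [IsBorder, List.suffix_append_iff_of_length_le _ hy, List.append_assoc,
    List.prefix_append_iff_of_length_le _ hx]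
  refine ⟨fun ⟨hB, _, hs, hp⟩ => ⟨hB, hs, hp⟩, fun ⟨hB, hs, hp⟩ => ⟨hB, ?_, hs, hp⟩⟩
  have := List.length_pos_iff.mpr hB
  simp only [List.length_append]
  omega

theorem isBorder_cons_iff {B z : List α} {a : α} :
    IsBorder B (a :: z) ↔ B ≠ [] ∧ B <:+ z ∧ B <+: a :: z := by
  constructor
  · rintro ⟨hB, hlt, hs, hp⟩
    refine ⟨hB, (List.suffix_cons_iff.mp hs).resolve_left ?_, hp⟩
    rintro rfl
    exact lt_irrefl _ hlt
  · rintro ⟨hB, hs, hp⟩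
    exact ⟨hB, Nat.lt_succ_of_le hs.length_le, hs.trans (List.suffix_cons a z), hp⟩

theorem unbordered_append_cons_iff {x y : List α} (c : α) (h : x.length = y.length) :
    Unbordered (x ++ c :: y) ↔ Unbordered (x ++ y) := by
  rw [show x ++ c :: y = x ++ [c] ++ y by simp, show x ++ y = x ++ [] ++ y by simp,
    unbordered_iff_forall_length_le (k := x.length) (by simp; omega),
    unbordered_iff_forall_length_le (k := x.length) (by simp; omega)]
  refine forall₂_congr fun B hB => ?_
  rw [isBorder_append_append_iff _ hB (h ▸ hB), isBorder_append_append_iff _ hB (h ▸ hB)]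

theorem unbordered_append_cons_iff_of_length_eq_succ {x y : List α} (c : α)
    (h : x.length = y.length + 1) :
    Unbordered (x ++ c :: y) ↔ Unbordered (x ++ y) ∧ x ≠ c :: y := by
  have hshort : ∀ B, B.length ≤ y.length → (IsBorder B (x ++ c :: y) ↔ IsBorder B (x ++ y)) := by
    intro B hB
    rw [show x ++ c :: y = x ++ [c] ++ y by simp, show x ++ y = x ++ [] ++ y by simp,
      isBorder_append_append_iff _ (by omega) hB, isBorder_append_append_iff _ (by omega) hB]
  have hhalf : ∀ B, B.length = x.length → (IsBorder B (x ++ c :: y) ↔ B = x ∧ B = c :: y) := by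
    intro B hB
    constructor
    · rintro ⟨-, -, hs, hp⟩
      exact ⟨((List.prefix_append_iff_of_length_le _ hB.le).mp hp).eq_of_length hB,
        ((List.suffix_append_iff_of_length_le _ (by simp; omega)).mp hs).eq_of_length
          (by simp; omega)⟩
    · rintro ⟨rfl, hxy⟩
      refine ⟨?_, by simp, hxy ▸ List.suffix_append _ _, List.prefix_append _ _⟩
      rw [← List.length_pos_iff]
      omega
  rw [unbordered_iff_forall_length_le (k := x.length) (by simp; omega),
    unbordered_iff_forall_length_le (k := y.length) (by simp; omega)]
  constructor
  · intro H
    exact ⟨fun B hB => (hshort B hB).not.mp (H B (by omega)),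
      fun hx => H x le_rfl ((hhalf x rfl).mpr ⟨rfl, hx⟩)⟩
  · rintro ⟨H, hne⟩ B hB
    rcases hB.lt_or_eq with hlt | heq
    · exact (hshort B (by omega)).not.mpr (H B (by omega))
    · rw [hhalf B heq]
      rintro ⟨rfl, hxy⟩
      exact hne hxy

theorem unbordered_append_tail_self_iff (x : List α) :
    Unbordered (x ++ x.tail) ↔ Unbordered x := by
  rcases x with _ | ⟨a, z⟩
  · rfl
  · rw [List.tail_cons, unbordered_iff_forall_length_le (k := z.length) (by simp; omega),
      unbordered_iff_forall_length_le (k := z.length) (by simp; omega)]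
    refine forall₂_congr fun B hB => ?_
    rw [show a :: z ++ z = a :: z ++ [] ++ z by simp,
      isBorder_append_append_iff _ (by simp; omega) hB, isBorder_cons_iff]

theorem unbordered_eraseIdx_iff_of_length_eq_two_mul_add_one {w : List α} {n : ℕ}
    (h : w.length = 2 * n + 1) : Unbordered (w.eraseIdx n) ↔ Unbordered w := by
  obtain ⟨x, c, y, rfl, rfl⟩ := List.exists_eq_append_cons_of_lt (w := w) (n := n) (by omega)
  rw [List.eraseIdx_append_cons_length,
    unbordered_append_cons_iff c (by simp at h; omega)]

theorem unbordered_iff_of_length_eq_two_mul_add_two {w : List α} {n : ℕ}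
    (h : w.length = 2 * n + 2) :
    Unbordered w ↔ Unbordered (w.eraseIdx (n + 1)) ∧ w.take (n + 1) ≠ w.drop (n + 1) := by
  obtain ⟨x, c, y, rfl, hx⟩ := List.exists_eq_append_cons_of_lt (w := w) (n := n + 1) (by omega)
  rw [← hx, List.eraseIdx_append_cons_length, List.take_left' rfl, List.drop_left' rfl,
    unbordered_append_cons_iff_of_length_eq_succ c (by simp at h; omega)]

theorem unbordered_eraseIdx_append_self_iff (x : List α) :
    Unbordered ((x ++ x).eraseIdx x.length) ↔ Unbordered x := by
  rw [List.eraseIdx_append_of_length_le le_rfl, Nat.sub_self, List.eraseIdx_zero,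
    unbordered_append_tail_self_iff]

theorem Nat.card_subtype_eq_card_and_add_card_and_not {p : α → Prop} (r : α → Prop)
    (h : {x | p x}.Finite) :
    Nat.card {x // p x} = Nat.card {x // p x ∧ r x} + Nat.card {x // p x ∧ ¬ r x} :=
  (Set.ncard_inter_add_ncard_sdiff_eq_ncard {x | p x} {x | r x} h).symm

theorem card_length_succ_eraseIdx (P : List α → Prop) {n L : ℕ} (hn : n ≤ L) :
    Nat.card {w : List α // w.length = L + 1 ∧ P (w.eraseIdx n)} =
      Nat.card α * Nat.card {u : List α // u.length = L ∧ P u} := by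
  rw [← Nat.card_prod]
  exact Nat.card_congr
    { toFun := fun w => (w.1[n]'(by omega),
        ⟨w.1.eraseIdx n, by rw [List.length_eraseIdx_of_lt (by omega)]; omega, w.2.2⟩)
      invFun := fun p => ⟨p.2.1.insertIdx n p.1,
        by rw [List.length_insertIdx_of_le_length (p.2.2.1.symm ▸ hn), p.2.2.1],
        by rw [List.eraseIdx_insertIdx_self]; exact p.2.2.2⟩
      left_inv := fun w => Subtype.ext (List.insertIdx_eraseIdx_getElem _)
      right_inv := fun p => Prod.ext (List.getElem_insertIdx_self _)
        (Subtype.ext (List.eraseIdx_insertIdx_self _)) }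

theorem card_unbordered_eraseIdx_square (n : ℕ) :
    Nat.card {w : List α // (w.length = 2 * n + 2 ∧ Unbordered (w.eraseIdx (n + 1))) ∧
      w.take (n + 1) = w.drop (n + 1)} =
      Nat.card {x : List α // x.length = n + 1 ∧ Unbordered x} := by
  refine Nat.card_congr
    { toFun := fun w => ⟨w.1.take (n + 1), ?_, ?_⟩
      invFun := fun x => ⟨x.1 ++ x.1, ⟨?_, ?_⟩, ?_⟩
      left_inv := fun w => Subtype.ext (List.eq_take_append_take_of_take_eq_drop w.2.2).symm
      right_inv := fun x => Subtype.ext (List.take_left' x.2.1) }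
  · have := w.2.1.1
    simp only [List.length_take]
    omega
  · rw [← unbordered_eraseIdx_append_self_iff, List.length_take_of_le (by omega),
      ← List.eq_take_append_take_of_take_eq_drop w.2.2]
    exact w.2.1.2
  · simp only [List.length_append, x.2.1]
    omega
  · have := (unbordered_eraseIdx_append_self_iff x.1).mpr x.2.2
    rwa [x.2.1] at this
  · rw [List.take_left' x.2.1, List.drop_left' x.2.1]

theorem countUnbordered_zero (q : ℕ) : countUnbordered q 0 = 1 :=
  Nat.card_eq_one_iff_exists.mpr
    ⟨⟨[], rfl, unbordered_nil⟩, fun w => Subtype.ext (List.length_eq_zero_iff.mp w.2.1)⟩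

theorem countUnbordered_two_mul_add_one (q n : ℕ) :
    countUnbordered q (2 * n + 1) = q * countUnbordered q (2 * n) := by
  have hcard := card_length_succ_eraseIdx (α := Fin q) Unbordered (by omega : n ≤ 2 * n)
  rw [Nat.card_fin] at hcard
  rw [countUnbordered, countUnbordered, ← hcard]
  exact Nat.card_congr (Equiv.subtypeEquivRight fun w =>
    and_congr_right fun hw => (unbordered_eraseIdx_iff_of_length_eq_two_mul_add_one hw).symm)

theorem countUnbordered_two_mul_add_two (q n : ℕ) :
    q * countUnbordered q (2 * n + 1) =
      countUnbordered q (2 * n + 2) + countUnbordered q (n + 1) := by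
  have hsplit := Nat.card_subtype_eq_card_and_add_card_and_not
    (p := fun w : List (Fin q) => w.length = 2 * n + 1 + 1 ∧ Unbordered (w.eraseIdx (n + 1)))
    (fun w => w.take (n + 1) ≠ w.drop (n + 1))
    ((List.finite_length_eq (Fin q) _).subset fun _ => And.left)
  rw [card_length_succ_eraseIdx _ (by omega : n + 1 ≤ 2 * n + 1), Nat.card_fin] at hsplit
  rw [countUnbordered, countUnbordered, countUnbordered, hsplit]
  congr 1
  · exact Nat.card_congr (Equiv.subtypeEquivRight fun w => by
      rw [and_assoc]
      exact and_congr_right fun h => (unbordered_iff_of_length_eq_two_mul_add_two h).symm)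
  · simp only [ne_eq, not_not]
    exact card_unbordered_eraseIdx_square n

theorem unbordered_count_recursion_general (q : ℕ) :
    countUnbordered q 0 = 1 ∧
    (∀ n : ℕ, countUnbordered q (2 * n + 1) = q * countUnbordered q (2 * n)) ∧
    (∀ n : ℕ, 1 ≤ n →
      (countUnbordered q (2 * n) : ℤ) =
        q * countUnbordered q (2 * n - 1) - countUnbordered q n) := by
  refine ⟨countUnbordered_zero q, countUnbordered_two_mul_add_one q, ?_⟩
  rintro (_ | n) hn
  · omega
  · have h := countUnbordered_two_mul_add_two q n
    rw [show 2 * (n + 1) - 1 = 2 * n + 1 by omega, show 2 * (n + 1) = 2 * n + 2 by ring]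
    linarith [congrArg (Nat.cast : ℕ → ℤ) h]

/-- For `q ≥ 1`, the counts `a m` of unbordered words of length `m` over a `q`-letter
alphabet satisfy `a 0 = 1`, `a (2n+1) = q·a (2n)`, and `a (2n) = q·a (2n-1) − a n`
(for `n ≥ 1`). -/
theorem unbordered_count_recursion (q : ℕ) (hq : 1 ≤ q) :
    countUnbordered q 0 = 1 ∧
    (∀ n : ℕ, countUnbordered q (2 * n + 1) = q * countUnbordered q (2 * n)) ∧
    (∀ n : ℕ, 1 ≤ n →
      (countUnbordered q (2 * n) : ℤ) =
        q * countUnbordered q (2 * n - 1) - countUnbordered q n) :=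
  unbordered_count_recursion_general q
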